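/- arXiv:2312.07276 — 3 statements merged into one kernel-verified Lean document; each statement's English description precedes it below -/
import Mathlib

section
/- Let Φ : ℝⁿ → ℝ be convex and differentiable on ℝⁿ, let S = {x⁽¹⁾, …, x⁽ᴷ⁾} ⊆ ℝⁿ be a finite set, and let d ∈ ℝⁿ be such that ∇Φ(x⁽ⁱ⁾) = d for every i = 1, …, K. Then ∇Φ(x) = d for every x in the convex hull of S. -/
/-!
Subtracting the linear form `⟪d, ·⟫` from `Φ` gives a convex function `ψ` whose gradient
vanishes at every `x⁽ⁱ⁾`, so each `x⁽ⁱ⁾` is a global minimiser of `ψ`. By Jensen's inequality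
`ψ` is bounded on the convex hull by its values at the `x⁽ⁱ⁾`, so every point of the hull is a
global minimiser too, and there the gradient of `ψ` vanishes, i.e. `∇Φ = d`.
-/

open Set Filter Topology InnerProductSpace

variable {E : Type*} [NormedAddCommGroup E] [NormedSpace ℝ E] {s : Set E} {f : E → ℝ}

theorem ConvexOn.add_apply_sub_le_of_hasFDerivAt (hf : ConvexOn ℝ s f) {f' : E →L[ℝ] ℝ} {a z : E}
    (ha : a ∈ s) (hz : z ∈ s) (hf' : HasFDerivAt f f' a) : f a + f' (z - a) ≤ f z := by
  set line : ℝ →ᵃ[ℝ] E := AffineMap.lineMap a z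
  have hline : ConvexOn ℝ (line ⁻¹' s) (f ∘ line) := hf.comp_affineMap line
  have hderiv : HasDerivAt (f ∘ line) (f' (z - a)) 0 :=
    (by simpa [line] using hf' : HasFDerivAt f f' (line 0)).comp_hasDerivAt 0
      AffineMap.hasDerivAt_lineMap
  have hslope := hline.le_slope_of_hasDerivAt (x := 0) (y := 1) (by simpa [line])
    (by simpa [line]) one_pos hderiv
  simp only [line, slope_def_field, Function.comp_apply, AffineMap.lineMap_apply_one,
    AffineMap.lineMap_apply_zero, sub_zero, div_one] at hslope
  linarith

theorem ConvexOn.isMinOn_of_hasFDerivAt_eq_zero (hf : ConvexOn ℝ s f) {a : E} (ha : a ∈ s)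
    (hf' : HasFDerivAt f (0 : E →L[ℝ] ℝ) a) : IsMinOn f s a := fun z hz => by
  simpa using hf.add_apply_sub_le_of_hasFDerivAt ha hz hf'

theorem ConvexOn.hasFDerivAt_of_mem_convexHull (hf : ConvexOn ℝ s f) {t : Set E} (hts : t ⊆ s)
    {L : E →L[ℝ] ℝ} (hL : ∀ x ∈ t, HasFDerivAt f L x) {y : E} (hy : y ∈ convexHull ℝ t)
    (hys : s ∈ 𝓝 y) (hfy : DifferentiableAt ℝ f y) : HasFDerivAt f L y := by
  set ψ : E → ℝ := f - L
  have hψ : ConvexOn ℝ s ψ := hf.sub (L.toLinearMap.concaveOn hf.1)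
  obtain ⟨x, hxt, hyx⟩ := hψ.exists_ge_of_mem_convexHull hts hy
  have hx_min : IsMinOn ψ s x :=
    hψ.isMinOn_of_hasFDerivAt_eq_zero (hts hxt) (sub_self L ▸ (hL x hxt).sub L.hasFDerivAt)
  have hy_min : IsLocalMin ψ y :=
    IsMinOn.isLocalMin (fun z hz => hyx.trans (hx_min hz)) hys
  have hψy : HasFDerivAt ψ (fderiv ℝ f y - L) y := hfy.hasFDerivAt.sub L.hasFDerivAt
  rw [← sub_eq_zero.mp (hy_min.hasFDerivAt_eq_zero hψy)]
  exact hfy.hasFDerivAt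

/-- **A convex function with constant gradient on a finite set has the same
gradient on its convex hull.**  If `Φ : ℝⁿ → ℝ` is convex and differentiable
and `∇Φ (x i) = d` for each of finitely many points `x 1, …, x K`, then
`∇Φ y = d` for every `y` in the convex hull of `{x 1, …, x K}`. -/
theorem gradient_const_on_convexHull {n K : ℕ}
    (Φ : EuclideanSpace ℝ (Fin n) → ℝ)
    (hΦ : ConvexOn ℝ Set.univ Φ) (hdiff : Differentiable ℝ Φ)
    (x : Fin K → EuclideanSpace ℝ (Fin n)) (d : EuclideanSpace ℝ (Fin n))
    (hgrad : ∀ i, gradient Φ (x i) = d) :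
    ∀ y ∈ convexHull ℝ (Set.range x), gradient Φ y = d := by
  intro y hy
  have hd : ∀ z ∈ range x, HasFDerivAt Φ (toDual ℝ _ d) z := by
    rintro _ ⟨i, rfl⟩
    rw [← hasGradientAt_iff_hasFDerivAt, ← hgrad i]
    exact (hdiff _).hasGradientAt
  refine HasGradientAt.gradient (hasGradientAt_iff_hasFDerivAt.mpr ?_)
  exact hΦ.hasFDerivAt_of_mem_convexHull (subset_univ _) hd hy univ_mem (hdiff y)
end

section
/- Let V, Φ_G, Φ_H : ℝⁿ → ℝ be convex and differentiable on ℝⁿ, let A = {a⁽¹⁾, …, a⁽ᴷ⁾} ⊆ ℝⁿ be a finite set, and let d ∈ ℝⁿ be such that ∇V(a) = d for every a ∈ A. Define G := ∇Φ_G and H := ∇Φ_H, and suppose G(a) = H(a) = ∇V(a) for every a ∈ A. Let T : ℝⁿ → ℝ satisfy 0 ≤ T(x) ≤ 1 for all x, and define Z(x) := T(x)·G(x) + (1 − T(x))·H(x). Then for every x in the convex hull of A, ∇V(x) = G(x) = H(x) = Z(x) = d. -/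
/-!
Subtracting the linear form `⟪d, ·⟫` from a convex function with gradient `d` at the points
`a i` leaves a convex function with vanishing derivative there, so every `a i` is a global
minimizer. Global minimizers of a convex function form a convex set, hence the whole convex
hull consists of minimizers, where the derivative vanishes again: `∇V = d` on the hull. The same
applies to `Φ_G` and `Φ_H`, since `G` and `H` agree with `∇V` at the `a i`, and then
`Z = T • d + (1 - T) • d = d`.
-/

open Set

theorem ConvexOn.isMinOn_of_mem_convexHull {𝕜 E β : Type*} [Semiring 𝕜] [PartialOrder 𝕜]
    [AddCommMonoid E] [Module 𝕜 E] [AddCommMonoid β] [PartialOrder β] [IsOrderedAddMonoid β]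
    [Module 𝕜 β] [PosSMulMono 𝕜 β] {t s : Set E} {f : E → β} (hf : ConvexOn 𝕜 t f)
    (hst : s ⊆ t) (hs : ∀ x ∈ s, IsMinOn f t x) {y : E} (hy : y ∈ convexHull 𝕜 s) :
    IsMinOn f t y := fun z hz =>
  have hsub : s ⊆ {x ∈ t | f x ≤ f z} := fun x hx => ⟨hst hx, hs x hx hz⟩
  (convexHull_min hsub (hf.convex_le (f z)) hy).2

namespace ConvexOn

variable {E : Type*} [NormedAddCommGroup E] [NormedSpace ℝ E] {f : E → ℝ}

theorem isMinOn_univ_of_hasFDerivAt_zero (hf : ConvexOn ℝ univ f) {x : E}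
    (hx : HasFDerivAt f (0 : E →L[ℝ] ℝ) x) : IsMinOn f univ x := by
  intro y _
  have hline : ConvexOn ℝ univ (f ∘ AffineMap.lineMap (k := ℝ) x y) := hf.comp_affineMap _
  have hderiv : HasDerivAt (f ∘ AffineMap.lineMap (k := ℝ) x y) 0 0 := by
    simpa using hx.comp_hasDerivAt_of_eq (x := (0 : ℝ)) AffineMap.hasDerivAt_lineMap
      (AffineMap.lineMap_apply_zero x y).symm
  have hslope := hline.le_slope_of_hasDerivAt (mem_univ 0) (mem_univ 1) one_pos hderiv
  simpa [slope_def_field] using hslope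

theorem fderiv_eq_of_mem_convexHull (hf : ConvexOn ℝ univ f) (hd : Differentiable ℝ f)
    {s : Set E} {φ : E →L[ℝ] ℝ} (hs : ∀ x ∈ s, fderiv ℝ f x = φ) {y : E}
    (hy : y ∈ convexHull ℝ s) : fderiv ℝ f y = φ := by
  have hφ : ∀ x, HasFDerivAt (fun z => f z - φ z) (fderiv ℝ f x - φ) x :=
    fun x => (hd x).hasFDerivAt.sub φ.hasFDerivAt
  have hconv : ConvexOn ℝ univ (fun z => f z - φ z) :=
    hf.sub (φ.toLinearMap.concaveOn convex_univ)
  have hmin : IsMinOn (fun z => f z - φ z) univ y :=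
    hconv.isMinOn_of_mem_convexHull (subset_univ s)
      (fun x hx => hconv.isMinOn_univ_of_hasFDerivAt_zero (by simpa [hs x hx] using hφ x)) hy
  exact sub_eq_zero.mp <|
    (hφ y).fderiv.symm.trans (hmin.isLocalMin Filter.univ_mem).fderiv_eq_zero

end ConvexOn

theorem ConvexOn.gradient_eq_of_mem_convexHull {E : Type*} [NormedAddCommGroup E]
    [InnerProductSpace ℝ E] [CompleteSpace E] {f : E → ℝ} (hf : ConvexOn ℝ univ f)
    (hd : Differentiable ℝ f) {s : Set E} {d : E}
    (hs : ∀ x ∈ s, gradient f x = d) {y : E} (hy : y ∈ convexHull ℝ s) : gradient f y = d := by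
  simp only [gradient, LinearIsometryEquiv.symm_apply_eq] at hs ⊢
  exact hf.fderiv_eq_of_mem_convexHull hd hs hy

theorem moge_generalization_general {n K : ℕ}
    (V ΦG ΦH : EuclideanSpace ℝ (Fin n) → ℝ)
    (hVc : ConvexOn ℝ Set.univ V) (hVd : Differentiable ℝ V)
    (hGc : ConvexOn ℝ Set.univ ΦG) (hGd : Differentiable ℝ ΦG)
    (hHc : ConvexOn ℝ Set.univ ΦH) (hHd : Differentiable ℝ ΦH)
    (a : Fin K → EuclideanSpace ℝ (Fin n)) (d : EuclideanSpace ℝ (Fin n))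
    (hgradV : ∀ i, gradient V (a i) = d)
    (G H : EuclideanSpace ℝ (Fin n) → EuclideanSpace ℝ (Fin n))
    (hGdef : ∀ y, G y = gradient ΦG y) (hHdef : ∀ y, H y = gradient ΦH y)
    (hagree : ∀ i, G (a i) = gradient V (a i) ∧ H (a i) = gradient V (a i))
    (T : EuclideanSpace ℝ (Fin n) → ℝ)
    (Z : EuclideanSpace ℝ (Fin n) → EuclideanSpace ℝ (Fin n))
    (hZ : ∀ y, Z y = T y • G y + (1 - T y) • H y) :
    ∀ y ∈ convexHull ℝ (Set.range a),
      gradient V y = d ∧ G y = d ∧ H y = d ∧ Z y = d := by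
  intro y hy
  have hV : gradient V y = d :=
    hVc.gradient_eq_of_mem_convexHull hVd (by rintro _ ⟨i, rfl⟩; exact hgradV i) hy
  have hG : G y = d := by
    rw [hGdef]
    refine hGc.gradient_eq_of_mem_convexHull hGd ?_ hy
    rintro _ ⟨i, rfl⟩
    rw [← hGdef, (hagree i).1, hgradV]
  have hH : H y = d := by
    rw [hHdef]
    refine hHc.gradient_eq_of_mem_convexHull hHd ?_ hy
    rintro _ ⟨i, rfl⟩
    rw [← hHdef, (hagree i).2, hgradV]
  refine ⟨hV, hG, hH, ?_⟩
  rw [hZ, hG, hH, ← add_smul, add_sub_cancel, one_smul]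

/-- **Generalization of the mixture-of-gradient-experts model.**
`V, Φ_G, Φ_H : ℝⁿ → ℝ` convex differentiable; `∇V = d` at each of the points
`a 1, …, a K`; the expert maps `G = ∇Φ_G` and `H = ∇Φ_H` agree with `∇V` at
each `a i`; `T` is a gating function with values in `[0,1]`, and
`Z = T·G + (1 − T)·H` the gated mixture.  Then on the convex hull of the
points, `∇V = G = H = Z = d`. -/
theorem moge_generalization {n K : ℕ}
    (V ΦG ΦH : EuclideanSpace ℝ (Fin n) → ℝ)
    (hVc : ConvexOn ℝ Set.univ V) (hVd : Differentiable ℝ V)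
    (hGc : ConvexOn ℝ Set.univ ΦG) (hGd : Differentiable ℝ ΦG)
    (hHc : ConvexOn ℝ Set.univ ΦH) (hHd : Differentiable ℝ ΦH)
    (a : Fin K → EuclideanSpace ℝ (Fin n)) (d : EuclideanSpace ℝ (Fin n))
    (hgradV : ∀ i, gradient V (a i) = d)
    (G H : EuclideanSpace ℝ (Fin n) → EuclideanSpace ℝ (Fin n))
    (hGdef : ∀ y, G y = gradient ΦG y) (hHdef : ∀ y, H y = gradient ΦH y)
    (hagree : ∀ i, G (a i) = gradient V (a i) ∧ H (a i) = gradient V (a i))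
    (T : EuclideanSpace ℝ (Fin n) → ℝ) (hT : ∀ y, T y ∈ Set.Icc (0 : ℝ) 1)
    (Z : EuclideanSpace ℝ (Fin n) → EuclideanSpace ℝ (Fin n))
    (hZ : ∀ y, Z y = T y • G y + (1 - T y) • H y) :
    ∀ y ∈ convexHull ℝ (Set.range a),
      gradient V y = d ∧ G y = d ∧ H y = d ∧ Z y = d :=
  moge_generalization_general V ΦG ΦH hVc hVd hGc hGd hHc hHd a d hgradV G H hGdef hHdef hagree T Z
    hZ
end

section
/- Let L ∈ ℕ, let F, A₀ be finite subsets of {1, …, L}, and set p := |F \ A₀|. Let Viol be a map from subsets of {1, …, L} to subsets of {1, …, L} satisfying: (i) Viol(A) ⊆ F \ A for every A, and (ii) Viol(A) ≠ ∅ whenever F ⊄ A. Define the iteration A(0) := A₀ and A(k+1) := A(k) ∪ Viol(A(k)) for k ≥ 0. Then there exists k ≤ p with Viol(A(k)) = ∅; i.e., the do-while loop of the constraint-screening algorithm terminates after at most p + 1 iterations, where p is the number of false-negative constraints. -/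
open Finset

/-
Every step that finds a violation adds at least one missing binding constraint, so
the number `|F \ A(k)|` of binding constraints still missing drops by at least one per step. If a
violation were found at every step `k ≤ p`, then `F \ A(p)` would already be empty, and then
`Viol (A p) ⊆ F \ A p = ∅`.
-/

namespace ConstraintScreening

variable {α : Type*} [DecidableEq α] {F : Finset α}

theorem card_sdiff_union_lt {A V : Finset α} (hV : V ⊆ F \ A) (hne : V.Nonempty) :
    #(F \ (A ∪ V)) < #(F \ A) := by
  rw [sdiff_union_distrib, ← Finset.sdiff_sdiff_left']
  exact card_lt_card (sdiff_ssubset hV hne)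

theorem card_sdiff_add_le {Viol : Finset α → Finset α} (hsub : ∀ A, Viol A ⊆ F \ A)
    {Aseq : ℕ → Finset α} (hsucc : ∀ k, Aseq (k + 1) = Aseq k ∪ Viol (Aseq k)) :
    ∀ k, (∀ j < k, (Viol (Aseq j)).Nonempty) → #(F \ Aseq k) + k ≤ #(F \ Aseq 0)
  | 0, _ => le_rfl
  | k + 1, hne => by
    have hlt : #(F \ Aseq (k + 1)) < #(F \ Aseq k) := by
      rw [hsucc k]
      exact card_sdiff_union_lt (hsub _) (hne k k.lt_succ_self)
    have ih := card_sdiff_add_le hsub hsucc k fun j hj => hne j (hj.trans k.lt_succ_self)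
    omega

theorem eq_empty_of_card_sdiff_eq_zero {Viol : Finset α → Finset α}
    (hsub : ∀ A, Viol A ⊆ F \ A) {A : Finset α} (h : #(F \ A) = 0) : Viol A = ∅ :=
  subset_empty.1 (card_eq_zero.1 h ▸ hsub A)

end ConstraintScreening

open ConstraintScreening in
theorem screening_loop_terminates_general {L : ℕ}
    (F A₀ : Finset (Fin L)) (p : ℕ) (hp : p = (F \ A₀).card)
    (Viol : Finset (Fin L) → Finset (Fin L))
    (hsub : ∀ A, Viol A ⊆ F \ A)
    (Aseq : ℕ → Finset (Fin L)) (h0 : Aseq 0 = A₀)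
    (hsucc : ∀ k, Aseq (k + 1) = Aseq k ∪ Viol (Aseq k)) :
    ∃ k ≤ p, Viol (Aseq k) = ∅ := by
  by_contra! hviol
  have hbound := card_sdiff_add_le hsub hsucc p fun j hj => hviol j hj.le
  rw [h0, ← hp] at hbound
  exact (hviol p le_rfl).ne_empty (eq_empty_of_card_sdiff_eq_zero hsub (by omega))

/-- **Termination of the constraint-screening do-while loop.**
`F` is the set of binding constraints, `A₀` the initially predicted binding
set, `p = |F \ A₀|` the number of false negatives.  The violation oracle
satisfies `Viol A ⊆ F \ A` and returns a nonempty set whenever `F ⊄ A`.  The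
iteration `A (k+1) = A k ∪ Viol (A k)` starting from `A 0 = A₀` reaches a step
`k ≤ p` with `Viol (A k) = ∅`, i.e. the loop terminates after at most `p + 1`
iterations. -/
theorem screening_loop_terminates {L : ℕ}
    (F A₀ : Finset (Fin L)) (p : ℕ) (hp : p = (F \ A₀).card)
    (Viol : Finset (Fin L) → Finset (Fin L))
    (hsub : ∀ A, Viol A ⊆ F \ A)
    (hne : ∀ A, ¬ F ⊆ A → (Viol A).Nonempty)
    (Aseq : ℕ → Finset (Fin L)) (h0 : Aseq 0 = A₀)
    (hsucc : ∀ k, Aseq (k + 1) = Aseq k ∪ Viol (Aseq k)) :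
    ∃ k ≤ p, Viol (Aseq k) = ∅ :=
  screening_loop_terminates_general F A₀ p hp Viol hsub Aseq h0 hsucc
end
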